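/- Suppose countably many programs indexed by k ∈ ℕ are run by a scheduler that in block j runs program k_j = log₂ A(j) for A(j) steps, where A(j) is the largest power of 2 dividing j. If program k halts after T_k steps, then the total number of steps executed by the scheduler across all programs before program k halts is at most (4 + k + log₂ n)·n·2^k, where n = ⌈T_k / 2^k⌉. -/

import Mathlib

/-!
Writing `S j = ∑_{i=1}^j A i`, the odd indices contribute `1` each and the even ones `2 A m`, so
`S (2m) = m + 2 S m` and `S (2m+1) = (m+1) + 2 S m`. Each halving of `j` thus costs about `j/2`,
and there are `log₂ j` halvings, giving `2 S j ≤ (log₂ j + 2) j`. Applied at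
`j = (2n-1)·2^k ≤ n·2^(k+1)`, with `log₂ j ≤ k + 1 + log₂ n`, this is the bound.
-/

/-- A006519: largest power of 2 dividing `j`. -/
def A (j : ℕ) : ℕ := 2 ^ (j.factorization 2)

lemma A_of_odd {i : ℕ} (hi : Odd i) : A i = 1 := by
  rw [A, Nat.factorization_eq_zero_of_not_dvd (Nat.two_dvd_ne_zero.mpr (Nat.odd_iff.mp hi)),
    pow_zero]

lemma A_two_mul {m : ℕ} (hm : m ≠ 0) : A (2 * m) = 2 * A m := by
  rw [A, A, Nat.factorization_mul two_ne_zero hm, Finsupp.add_apply,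
    Nat.Prime.factorization_self Nat.prime_two, pow_add, pow_one]

lemma sum_A_Icc_two_mul_add_one (m : ℕ) :
    ∑ i ∈ Finset.Icc 1 (2 * m + 1), A i = (m + 1) + 2 * ∑ i ∈ Finset.Icc 1 m, A i := by
  induction m with
  | zero => simp [A_of_odd odd_one]
  | succ m ih =>
    rw [show 2 * (m + 1) + 1 = 2 * m + 1 + 1 + 1 by ring,
      Finset.sum_Icc_succ_top (by omega), Finset.sum_Icc_succ_top (by omega), ih,
      show 2 * m + 1 + 1 = 2 * (m + 1) by ring, A_two_mul m.succ_ne_zero,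
      A_of_odd (odd_two_mul_add_one (m + 1)), Finset.sum_Icc_succ_top (by omega)]
    ring

lemma sum_A_Icc_two_mul (m : ℕ) :
    ∑ i ∈ Finset.Icc 1 (2 * m), A i = m + 2 * ∑ i ∈ Finset.Icc 1 m, A i := by
  cases m with
  | zero => simp
  | succ m =>
    rw [show 2 * (m + 1) = 2 * m + 1 + 1 by ring, Finset.sum_Icc_succ_top (by omega),
      sum_A_Icc_two_mul_add_one, show 2 * m + 1 + 1 = 2 * (m + 1) by ring,
      A_two_mul m.succ_ne_zero, Finset.sum_Icc_succ_top (by omega)]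
    ring

lemma two_mul_sum_A_Icc_le (j : ℕ) :
    2 * ∑ i ∈ Finset.Icc 1 j, A i ≤ (Nat.log 2 j + 2) * j := by
  induction j using Nat.strong_induction_on with
  | _ j ih =>
    obtain ⟨m, rfl | rfl⟩ := Nat.even_or_odd' j
    · rcases Nat.eq_zero_or_pos m with rfl | hm
      · simp
      have hlog : Nat.log 2 (2 * m) = Nat.log 2 m + 1 := by
        rw [mul_comm, Nat.log_mul_base one_lt_two hm.ne']
      have := ih m (by omega)
      rw [sum_A_Icc_two_mul, hlog]
      nlinarith
    · rcases Nat.eq_zero_or_pos m with rfl | hm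
      · simp [A_of_odd odd_one]
      have hlog : Nat.log 2 m + 1 ≤ Nat.log 2 (2 * m + 1) := by
        rw [← Nat.log_mul_base one_lt_two hm.ne', mul_comm]
        exact Nat.log_mono_right (Nat.le_succ _)
      have := ih m (by omega)
      rw [sum_A_Icc_two_mul_add_one]
      nlinarith

theorem stmt_6_general (k n j : ℕ) (hj : j = (2 * n - 1) * 2 ^ k) :
    (∑ i ∈ Finset.Icc 1 j, A i) ≤ (4 + k + Nat.log 2 n) * n * 2 ^ k := by
  have hj_le : j ≤ 2 * n * 2 ^ k := hj ▸ Nat.mul_le_mul_right _ (Nat.sub_le _ _)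
  have hlog : Nat.log 2 j ≤ Nat.log 2 n + k + 1 := by
    have hn_lt : n < 2 ^ (Nat.log 2 n + 1) := Nat.lt_pow_succ_log_self one_lt_two n
    refine Nat.lt_succ_iff.mp (Nat.log_lt_of_lt_pow' (by omega) ?_)
    calc j ≤ 2 * n * 2 ^ k := hj_le
      _ < 2 * 2 ^ (Nat.log 2 n + 1) * 2 ^ k := by gcongr
      _ = 2 ^ (Nat.log 2 n + k + 1 + 1) := by ring
  have hsum := two_mul_sum_A_Icc_le j
  calc (∑ i ∈ Finset.Icc 1 j, A i) ≤ (Nat.log 2 j + 2) * j / 2 := by omega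
    _ ≤ (Nat.log 2 n + k + 3) * (2 * n * 2 ^ k) / 2 :=
      Nat.div_le_div_right (Nat.mul_le_mul (by omega) hj_le)
    _ = (3 + k + Nat.log 2 n) * n * 2 ^ k := by
      rw [show (Nat.log 2 n + k + 3) * (2 * n * 2 ^ k) = ((3 + k + Nat.log 2 n) * n * 2 ^ k) * 2
        by ring, Nat.mul_div_cancel _ two_pos]
    _ ≤ (4 + k + Nat.log 2 n) * n * 2 ^ k := by gcongr; omega

/-- Uniform Doubling Scheduler: program `k` receives its `n`-th block of `2^k` steps
at block index `j = (2n-1)·2^k`; the total work through block `j` is `∑_{i=1}^j A i`.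
If program `k` halts after `T` steps (so it halts within its `n`-th block,
`n = ⌈T/2^k⌉`), the total number of steps executed by the scheduler before program
`k` halts is at most `(4 + k + log₂ n)·n·2^k`. -/
theorem stmt_6 (k T n j : ℕ) (hT : 1 ≤ T)
    (hn : n = ⌈(T : ℝ) / 2 ^ k⌉₊) (hj : j = (2 * n - 1) * 2 ^ k) :
    (∑ i ∈ Finset.Icc 1 j, A i) ≤ (4 + k + Nat.log 2 n) * n * 2 ^ k :=
  stmt_6_general k n j hj
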